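/- Let {L_a}_{a∈A} be a finite family of affine subspaces of W, set X = ⋃_{a∈A} L_a, and let X_reg = {x ∈ X | there exist an open neighborhood U of x and an affine subspace L of W with X ∩ U = L ∩ U} be the regular locus of X. Let S ⊆ X be a closed subset such that S ∩ X_reg is open in X_reg and S is the closure of S ∩ X_reg. Then S is PL. -/

import Mathlib

open Set

/-- An (open or closed) affine half-space in a real vector space. -/
def IsHalfspace {V : Type*} [AddCommGroup V] [Module ℝ V] (H : Set V) : Prop :=
  ∃ (f : V →ₗ[ℝ] ℝ) (c : ℝ), H = {x | f x < c} ∨ H = {x | f x ≤ c}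

/-- A convex polyhedron: the intersection of finitely many open or closed affine
half-spaces (the empty intersection being the whole space). -/
def IsConvexPolyhedron {V : Type*} [AddCommGroup V] [Module ℝ V] (P : Set V) : Prop :=
  ∃ (n : ℕ) (H : Fin n → Set V), (∀ i, IsHalfspace (H i)) ∧ P = ⋂ i, H i

/-- A PL (piecewise linear) set: a finite union of convex polyhedra. -/
def IsPL {V : Type*} [AddCommGroup V] [Module ℝ V] (S : Set V) : Prop :=
  ∃ (n : ℕ) (P : Fin n → Set V), (∀ i, IsConvexPolyhedron (P i)) ∧ S = ⋃ i, P i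


/-- The regular locus of a union `X` of affine subspaces: points near which `X`
coincides with a single affine subspace. -/
def regLocus {W : Type*} [NormedAddCommGroup W] [NormedSpace ℝ W] (X : Set W) : Set W :=
  {x ∈ X | ∃ (U : Set W) (L : AffineSubspace ℝ W),
    IsOpen U ∧ x ∈ U ∧ X ∩ U = (L : Set W) ∩ U}

/-!
The regular locus of `X` is the union of the generic loci `L a \ ⋃ {L b | ¬ L b ≤ L a}`, so `S` is
the union of the closures of the sets `S ∩ genericLocus L a`. Fix `a` with nonempty generic locus
and choose, for each `L b` not contained in `L a`, a hyperplane containing `L b` but not `L a`.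
These hyperplanes cut `L a` into finitely many open convex chambers inside the generic locus; as
`S` is relatively clopen there, each chamber lies in `S` or misses it. A nonempty relatively open
subset of `L a` is not covered by finitely many proper affine subspaces, so the chambers contained
in `S` are dense in `S ∩ genericLocus L a`, whose closure is therefore a finite union of closed
chambers, i.e. of polyhedra.
-/

section Polyhedra

variable {V : Type*} [AddCommGroup V] [Module ℝ V]

theorem isConvexPolyhedron_iInter_of_isHalfspace {ι : Type*} [Finite ι] {H : ι → Set V}
    (hH : ∀ i, IsHalfspace (H i)) : IsConvexPolyhedron (⋂ i, H i) := by
  obtain ⟨n, ⟨e⟩⟩ := Finite.exists_equiv_fin ι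
  exact ⟨n, H ∘ e.symm, fun _ => hH _, (e.symm.iInf_comp (g := H)).symm⟩

theorem isConvexPolyhedron_iInter {ι : Type*} [Finite ι] {P : ι → Set V}
    (hP : ∀ i, IsConvexPolyhedron (P i)) : IsConvexPolyhedron (⋂ i, P i) := by
  choose m H hH hPH using hP
  have : ⋂ i, P i = ⋂ k : Σ i, Fin (m i), H k.1 k.2 := by
    simp only [iInter_sigma, hPH]
  exact this ▸ isConvexPolyhedron_iInter_of_isHalfspace fun k => hH k.1 k.2

theorem IsConvexPolyhedron.inter {P Q : Set V} (hP : IsConvexPolyhedron P)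
    (hQ : IsConvexPolyhedron Q) : IsConvexPolyhedron (P ∩ Q) :=
  inter_eq_iInter ▸ isConvexPolyhedron_iInter (Bool.forall_bool.2 ⟨hQ, hP⟩)

theorem isConvexPolyhedron_setOf_le (f : V →ₗ[ℝ] ℝ) (c : ℝ) :
    IsConvexPolyhedron {x | f x ≤ c} :=
  ⟨1, fun _ => {x | f x ≤ c}, fun _ => ⟨f, c, Or.inr rfl⟩, (iInter_const _).symm⟩

theorem isConvexPolyhedron_setOf_eq (f : V →ₗ[ℝ] ℝ) (c : ℝ) :
    IsConvexPolyhedron {x | f x = c} := by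
  have : {x | f x = c} = {x | f x ≤ c} ∩ {x | (-f) x ≤ -c} := by
    ext x
    simp [le_antisymm_iff]
  exact this ▸ (isConvexPolyhedron_setOf_le f c).inter (isConvexPolyhedron_setOf_le _ _)

theorem isConvexPolyhedron_empty : IsConvexPolyhedron (∅ : Set V) := by
  convert isConvexPolyhedron_setOf_le (0 : V →ₗ[ℝ] ℝ) (-1)
  ext
  norm_num

theorem AffineSubspace.isConvexPolyhedron [FiniteDimensional ℝ V] (K : AffineSubspace ℝ V) :
    IsConvexPolyhedron (K : Set V) := by
  obtain rfl | ⟨p, hp⟩ := K.eq_bot_or_nonempty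
  · exact isConvexPolyhedron_empty
  -- `K` is cut out by the coordinate functionals of `V ⧸ K.direction`.
  let b := Module.finBasis ℝ (V ⧸ K.direction)
  have : (K : Set V) =
      ⋂ i, {x | (b.coord i ∘ₗ K.direction.mkQ) x = b.coord i (K.direction.mkQ p)} := by
    ext x
    rw [SetLike.mem_coe, ← AffineSubspace.vsub_right_mem_direction_iff_mem hp,
      ← Submodule.Quotient.mk_eq_zero, ← Submodule.mkQ_apply, ← b.forall_coord_eq_zero_iff]
    simp [sub_eq_zero]
  exact this ▸ isConvexPolyhedron_iInter fun i => isConvexPolyhedron_setOf_eq _ _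

theorem IsConvexPolyhedron.isPL {P : Set V} (hP : IsConvexPolyhedron P) : IsPL P :=
  ⟨1, fun _ => P, fun _ => hP, (iUnion_const _).symm⟩

theorem isPL_iUnion {ι : Type*} [Finite ι] {S : ι → Set V} (hS : ∀ i, IsPL (S i)) :
    IsPL (⋃ i, S i) := by
  choose m P hP hSP using hS
  obtain ⟨n, ⟨e⟩⟩ := Finite.exists_equiv_fin (Σ i, Fin (m i))
  refine ⟨n, fun k => P (e.symm k).1 (e.symm k).2, fun _ => hP _ _, ?_⟩
  rw [e.symm.surjective.iUnion_comp (fun k : Σ i, Fin (m i) => P k.1 k.2), iUnion_sigma]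
  simp only [hSP]

theorem isPL_empty : IsPL (∅ : Set V) :=
  ⟨0, Fin.elim0, fun i => i.elim0, (iUnion_of_empty _).symm⟩

end Polyhedra

theorem AffineSubspace.exists_hyperplane {V : Type*} [AddCommGroup V] [Module ℝ V]
    {K L : AffineSubspace ℝ V} (hLK : ¬ L ≤ K) :
    ∃ (H : AffineSubspace ℝ V) (f : V →ₗ[ℝ] ℝ) (c : ℝ),
      K ≤ H ∧ ¬ L ≤ H ∧ (H : Set V) = {x | f x = c} := by
  obtain rfl | ⟨p, hp⟩ := K.eq_bot_or_nonempty
  · exact ⟨⊥, 0, 1, le_rfl, hLK, by ext; simp⟩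
  obtain ⟨q, hqL, hqK⟩ := SetLike.not_le_iff_exists.1 hLK
  have hqp : q -ᵥ p ∉ K.direction := (K.vsub_right_mem_direction_iff_mem hp q).not.2 hqK
  obtain ⟨f, hfq, hfK⟩ := Submodule.exists_dual_map_eq_bot_of_notMem hqp inferInstance
  have hmem : ∀ x, x ∈ AffineSubspace.mk' p (LinearMap.ker f) ↔ f x = f p := by
    simp [AffineSubspace.mem_mk', sub_eq_zero]
  refine ⟨AffineSubspace.mk' p (LinearMap.ker f), f, f p, fun x hx => ?_, fun hle => ?_,
    Set.ext hmem⟩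
  · rw [← K.vsub_right_mem_direction_iff_mem hp] at hx
    have : f (x -ᵥ p) ∈ (⊥ : Submodule ℝ ℝ) := hfK ▸ Submodule.mem_map_of_mem hx
    exact AffineSubspace.mem_mk'.2 this
  · exact hfq (by simpa [sub_eq_zero] using (hmem q).1 (hle hqL))

section AffineSubspaces

variable {W : Type*} [NormedAddCommGroup W] [NormedSpace ℝ W] [FiniteDimensional ℝ W]

theorem IsOpen.exists_mem_forall_notMem_affineSubspace {G : Set W} (hG : IsOpen G)
    (hne : G.Nonempty) {ι : Type*} [Finite ι] {A : ι → AffineSubspace ℝ W} (hA : ∀ j, A j ≠ ⊤) :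
    ∃ x ∈ G, ∀ j, x ∉ A j := by
  have hdense : Dense (⋂ j, ((A j : Set W))ᶜ) := by
    refine dense_iInter_of_isOpen (fun j => (A j).closed_of_finiteDimensional.isOpen_compl)
      fun j => interior_eq_empty_iff_dense_compl.1 ?_
    by_contra h
    refine hA j (top_unique ?_)
    rw [← isOpen_interior.affineSpan_eq_top (nonempty_iff_ne_empty.2 h)]
    exact affineSpan_le.2 interior_subset
  obtain ⟨x, hxG, hx⟩ := hdense.inter_open_nonempty G hG hne
  exact ⟨x, hxG, mem_iInter.1 hx⟩

theorem AffineSubspace.exists_mem_forall_notMem {L : AffineSubspace ℝ W} {G : Set W}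
    (hG : IsOpen G) {x₀ : W} (hx₀L : x₀ ∈ L) (hx₀G : x₀ ∈ G) {ι : Type*} [Finite ι]
    {A : ι → AffineSubspace ℝ W} (hA : ∀ j, ¬ L ≤ A j) :
    ∃ x ∈ L, x ∈ G ∧ ∀ j, x ∉ A j := by
  let φ : L.direction →ᵃ[ℝ] W :=
    (AffineEquiv.vaddConst ℝ x₀).toAffineMap.comp L.direction.subtype.toAffineMap
  have hφ : Continuous φ := φ.continuous_of_finiteDimensional
  have hA' : ∀ j, (A j).comap φ ≠ ⊤ := by
    intro j htop
    refine hA j fun p hp => ?_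
    have : (⟨p -ᵥ x₀, L.vsub_mem_direction hp hx₀L⟩ : L.direction) ∈ (A j).comap φ :=
      htop ▸ AffineSubspace.mem_top ℝ _ _
    simpa [φ] using this
  obtain ⟨v, hvG, hv⟩ := (hG.preimage hφ).exists_mem_forall_notMem_affineSubspace
    ⟨0, by simpa [φ] using hx₀G⟩ hA'
  exact ⟨φ v, L.vadd_mem_of_mem_direction v.2 hx₀L, hvG, hv⟩

theorem AffineSubspace.le_of_inter_subset {A B : AffineSubspace ℝ W} {U : Set W}
    (hU : IsOpen U) {x : W} (hxA : x ∈ A) (hxU : x ∈ U) (h : (A : Set W) ∩ U ⊆ B) : A ≤ B := by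
  by_contra hAB
  obtain ⟨y, hyA, hyU, hyB⟩ :=
    A.exists_mem_forall_notMem hU hxA hxU (A := fun _ : Unit => B) fun _ => hAB
  exact hyB () (h ⟨hyA, hyU⟩)

end AffineSubspaces

theorem Set.inter_eq_inter_of_subset {α : Type*} {S U R T : Set α} (h : S ∩ R = U ∩ R)
    (hT : T ⊆ R) : S ∩ T = U ∩ T := by
  rw [← inter_eq_right.2 hT, ← inter_assoc, h, inter_assoc]

theorem IsPreconnected.subset_or_disjoint_of_inter_eq {X : Type*} [TopologicalSpace X]
    {C S U : Set X} (hC : IsPreconnected C) (hS : IsClosed S) (hU : IsOpen U)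
    (h : S ∩ C = U ∩ C) : C ⊆ S ∨ Disjoint C S := by
  have hUS : ∀ x ∈ C, x ∈ U ↔ x ∈ S := fun x hx =>
    ⟨fun hxU => (h.symm ▸ ⟨hxU, hx⟩ : x ∈ S ∩ C).1, fun hxS => (h ▸ ⟨hxS, hx⟩ : x ∈ U ∩ C).1⟩
  refine (isPreconnected_iff_subset_of_disjoint.1 hC U Sᶜ hU hS.isOpen_compl ?_ ?_).imp
    (fun hCU x hx => (hUS x hx).1 (hCU hx)) subset_compl_iff_disjoint_right.1
  · exact fun x hx => (em (x ∈ S)).imp (hUS x hx).2 id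
  · exact eq_empty_of_forall_notMem fun x ⟨hx, hxU, hxS⟩ => hxS ((hUS x hx).1 hxU)

section Chambers

variable {V : Type*} [AddCommGroup V] [Module ℝ V] {ι : Type*}

/-- The chamber of `K` with sign pattern `σ` for the hyperplanes `f j = c j`; it is empty as soon
as some `σ j` is zero. -/
def chamber (K : AffineSubspace ℝ V) (f : ι → V →ₗ[ℝ] ℝ) (c : ι → ℝ) (σ : ι → SignType) :
    Set V :=
  (K : Set V) ∩ ⋂ j, {x | ((σ j : ℝ) • f j) x < σ j * c j}

variable {K : AffineSubspace ℝ V} {f : ι → V →ₗ[ℝ] ℝ} {c : ι → ℝ}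

theorem convex_chamber (σ : ι → SignType) : Convex ℝ (chamber K f c σ) :=
  K.convex.inter (convex_iInter fun _ => convex_halfSpace_lt (LinearMap.isLinear _) _)

theorem ne_of_mem_chamber {σ : ι → SignType} {x : V} (hx : x ∈ chamber K f c σ) (j : ι) :
    f j x ≠ c j := by
  intro h
  have := mem_iInter.1 hx.2 j
  simp [h] at this

theorem mem_chamber_sign {x : V} (hxK : x ∈ K) (hx : ∀ j, f j x ≠ c j) :
    x ∈ chamber K f c (fun j => SignType.sign (c j - f j x)) := by
  refine ⟨hxK, mem_iInter.2 fun j => ?_⟩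
  have hpos : 0 < |c j - f j x| := abs_pos.2 (sub_ne_zero.2 (hx j).symm)
  rw [← sign_mul_self, mul_sub] at hpos
  simpa [sub_pos] using hpos

end Chambers

section ClosedChambers

variable {W : Type*} [NormedAddCommGroup W] [NormedSpace ℝ W] [FiniteDimensional ℝ W]

theorem closure_inter_iInter_setOf_lt {C : Set W} (hCconv : Convex ℝ C) (hCclosed : IsClosed C)
    {ι : Type*} {g : ι → W →ₗ[ℝ] ℝ} {e : ι → ℝ} (hne : (C ∩ ⋂ j, {x | g j x < e j}).Nonempty) :
    closure (C ∩ ⋂ j, {x | g j x < e j}) = C ∩ ⋂ j, {x | g j x ≤ e j} := by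
  obtain ⟨x₀, hx₀C, hx₀⟩ := hne
  refine subset_antisymm (closure_minimal ?_ ?_) fun q ⟨hqC, hq⟩ => ?_
  · exact inter_subset_inter_right C (iInter_mono fun j x (hx : g j x < e j) => hx.le)
  · exact hCclosed.inter (isClosed_iInter fun j =>
      isClosed_le (g j).continuous_of_finiteDimensional continuous_const)
  -- `q` lies in the closure of the open segment from `q` to `x₀`.
  refine closure_mono ?_ (segment_subset_closure_openSegment (left_mem_segment ℝ q x₀))
  rintro _ ⟨a, b, ha, hb, hab, rfl⟩
  refine ⟨hCconv.openSegment_subset hqC hx₀C ⟨a, b, ha, hb, hab, rfl⟩, mem_iInter.2 fun j => ?_⟩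
  have hqj : g j q ≤ e j := mem_iInter.1 hq j
  have hx₀j : g j x₀ < e j := mem_iInter.1 hx₀ j
  show g j (a • q + b • x₀) < e j
  calc g j (a • q + b • x₀) = a * g j q + b * g j x₀ := by simp
    _ < a * e j + b * e j :=
      add_lt_add_of_le_of_lt (mul_le_mul_of_nonneg_left hqj ha.le) (mul_lt_mul_of_pos_left hx₀j hb)
    _ = e j := by rw [← add_mul, hab, one_mul]

theorem isPL_closure_chamber {ι : Type*} [Finite ι] (K : AffineSubspace ℝ W)
    (f : ι → W →ₗ[ℝ] ℝ) (c : ι → ℝ) (σ : ι → SignType) : IsPL (closure (chamber K f c σ)) := by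
  rcases (chamber K f c σ).eq_empty_or_nonempty with h | h
  · rw [h, closure_empty]
    exact isPL_empty
  rw [chamber, closure_inter_iInter_setOf_lt K.convex K.closed_of_finiteDimensional h]
  exact (K.isConvexPolyhedron.inter
    (isConvexPolyhedron_iInter fun _ => isConvexPolyhedron_setOf_le _ _)).isPL

theorem isPL_closure_inter_diff_iUnion {K : AffineSubspace ℝ W} {ι : Type*} [Finite ι]
    {B : ι → AffineSubspace ℝ W} (hKB : ∀ j, ¬ K ≤ B j) {S U : Set W} (hS : IsClosed S)
    (hU : IsOpen U) (hSU : S ∩ (K \ ⋃ j, B j) = U ∩ (K \ ⋃ j, B j)) :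
    IsPL (closure (S ∩ (K \ ⋃ j, B j))) := by
  choose H f c hBH hKH hHf using fun j => AffineSubspace.exists_hyperplane (hKB j)
  set M := (K : Set W) \ ⋃ j, (B j : Set W)
  have hchamber : ∀ σ, chamber K f c σ ⊆ M := fun σ x hx =>
    ⟨hx.1, mem_iUnion.not.2 fun ⟨j, hxB⟩ =>
      ne_of_mem_chamber hx j ((Set.ext_iff.1 (hHf j) x).1 (hBH j hxB))⟩
  have hdense : S ∩ M ⊆ closure (⋃ σ, S ∩ chamber K f c σ) := by
    rintro x ⟨hxS, hxK, hxB⟩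
    have hxU : x ∈ U := (hSU ▸ ⟨hxS, hxK, hxB⟩ : x ∈ U ∩ M).1
    have hO : IsOpen (⋃ j, (B j : Set W))ᶜ :=
      (isClosed_iUnion_of_finite fun j => (B j).closed_of_finiteDimensional).isOpen_compl
    refine mem_closure_iff.2 fun G hG hxG => ?_
    obtain ⟨y, hyK, ⟨⟨hyG, hyU⟩, hyB⟩, hyH⟩ :=
      K.exists_mem_forall_notMem ((hG.inter hU).inter hO) hxK ⟨⟨hxG, hxU⟩, hxB⟩ hKH
    have hyS : y ∈ S := (hSU.symm ▸ ⟨hyU, hyK, hyB⟩ : y ∈ S ∩ M).1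
    have hyf : ∀ j, f j y ≠ c j := fun j hj => hyH j ((Set.ext_iff.1 (hHf j) y).2 hj)
    exact ⟨y, hyG, mem_iUnion_of_mem _ ⟨hyS, mem_chamber_sign hyK hyf⟩⟩
  have hclosure : closure (S ∩ M) = ⋃ σ, closure (S ∩ chamber K f c σ) := by
    rw [← closure_iUnion_of_finite]
    exact subset_antisymm (closure_minimal hdense isClosed_closure)
      (closure_mono (iUnion_subset fun σ => inter_subset_inter_right S (hchamber σ)))
  rw [hclosure]
  refine isPL_iUnion fun σ => ?_
  rcases (convex_chamber σ).isPreconnected.subset_or_disjoint_of_inter_eq hS hU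
    (inter_eq_inter_of_subset hSU (hchamber σ)) with h | h
  · rw [inter_eq_right.2 h]
    exact isPL_closure_chamber K f c σ
  · rw [h.symm.inter_eq, closure_empty]
    exact isPL_empty

end ClosedChambers

section RegularLocus

variable {W : Type*} [NormedAddCommGroup W] [NormedSpace ℝ W] {ι : Type*}

def genericLocus (L : ι → AffineSubspace ℝ W) (a : ι) : Set W :=
  (L a : Set W) \ ⋃ b : {b // ¬ L b ≤ L a}, (L b : Set W)

theorem not_le_of_mem_genericLocus {L : ι → AffineSubspace ℝ W} {a b : ι} {x : W}
    (hx : x ∈ genericLocus L a) (hb : ¬ L b ≤ L a) : ¬ L a ≤ L b :=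
  fun h => hx.2 (mem_iUnion_of_mem ⟨b, hb⟩ (h hx.1))

variable [FiniteDimensional ℝ W]

theorem genericLocus_subset_regLocus [Finite ι] (L : ι → AffineSubspace ℝ W) (a : ι) :
    genericLocus L a ⊆ regLocus (⋃ b, (L b : Set W)) := by
  rintro x ⟨hxa, hxO⟩
  refine ⟨mem_iUnion_of_mem a hxa, (⋃ b : {b // ¬ L b ≤ L a}, (L b : Set W))ᶜ, L a,
    (isClosed_iUnion_of_finite fun b : {b // ¬ L b ≤ L a} =>
      (L b).closed_of_finiteDimensional).isOpen_compl,
    hxO, Set.ext fun y => ⟨fun ⟨hyX, hyO⟩ => ⟨?_, hyO⟩,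
      fun ⟨hya, hyO⟩ => ⟨mem_iUnion_of_mem a hya, hyO⟩⟩⟩
  obtain ⟨b, hyb⟩ := mem_iUnion.1 hyX
  by_contra hya
  exact hyO (mem_iUnion_of_mem ⟨b, fun hba => hya (hba hyb)⟩ hyb)

theorem regLocus_subset_iUnion_genericLocus [Finite ι] (L : ι → AffineSubspace ℝ W) :
    regLocus (⋃ b, (L b : Set W)) ⊆ ⋃ a, genericLocus L a := by
  rintro x ⟨hxX, U, Lx, hU, hxU, hXU⟩
  have hXULx : ∀ y ∈ ⋃ b, (L b : Set W), y ∈ U → y ∈ Lx := fun y hyX hyU =>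
    (hXU ▸ ⟨hyX, hyU⟩ : y ∈ (Lx : Set W) ∩ U).1
  have hxLx : x ∈ Lx := hXULx x hxX hxU
  obtain ⟨a, ha⟩ : ∃ a, Lx ≤ L a := by
    by_contra! h
    obtain ⟨y, hyLx, hyU, hy⟩ := Lx.exists_mem_forall_notMem hU hxLx hxU h
    obtain ⟨b, hyb⟩ := mem_iUnion.1 (hXU ▸ ⟨hyLx, hyU⟩ : y ∈ (⋃ b, (L b : Set W)) ∩ U).1
    exact hy b hyb
  refine mem_iUnion_of_mem a ⟨ha hxLx, mem_iUnion.not.2 fun ⟨⟨b, hb⟩, hxb⟩ => hb ?_⟩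
  exact (AffineSubspace.le_of_inter_subset hU hxb hxU fun y ⟨hyb, hyU⟩ =>
    hXULx y (mem_iUnion_of_mem b hyb) hyU).trans ha

theorem regLocus_iUnion [Finite ι] (L : ι → AffineSubspace ℝ W) :
    regLocus (⋃ b, (L b : Set W)) = ⋃ a, genericLocus L a :=
  (regLocus_subset_iUnion_genericLocus L).antisymm
    (iUnion_subset (genericLocus_subset_regLocus L))

end RegularLocus

theorem closed_union_of_reg_is_PL_general {W : Type*} [NormedAddCommGroup W] [NormedSpace ℝ W]
    [FiniteDimensional ℝ W] (n : ℕ) (L : Fin n → AffineSubspace ℝ W)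
    (X : Set W) (hX : X = ⋃ a, (L a : Set W)) (S : Set W)
    (hopen : ∃ U : Set W, IsOpen U ∧ S ∩ regLocus X = U ∩ regLocus X)
    (hdense : S = closure (S ∩ regLocus X)) :
    IsPL S := by
  obtain ⟨U, hU, hSU⟩ := hopen
  subst hX
  have hSclosed : IsClosed S := hdense ▸ isClosed_closure
  rw [hdense, regLocus_iUnion, inter_iUnion, closure_iUnion_of_finite]
  refine isPL_iUnion fun a => ?_
  rcases (genericLocus L a).eq_empty_or_nonempty with h | ⟨x, hx⟩
  · rw [h, inter_empty, closure_empty]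
    exact isPL_empty
  exact isPL_closure_inter_diff_iUnion (fun b => not_le_of_mem_genericLocus hx b.2)
    hSclosed hU (inter_eq_inter_of_subset hSU (genericLocus_subset_regLocus L a))

theorem closed_union_of_reg_is_PL {W : Type*} [NormedAddCommGroup W] [NormedSpace ℝ W]
    [FiniteDimensional ℝ W] (n : ℕ) (L : Fin n → AffineSubspace ℝ W)
    (X : Set W) (hX : X = ⋃ a, (L a : Set W)) (S : Set W)
    (hSX : S ⊆ X) (hSclosed : IsClosed S)
    (hopen : ∃ U : Set W, IsOpen U ∧ S ∩ regLocus X = U ∩ regLocus X)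
    (hdense : S = closure (S ∩ regLocus X)) :
    IsPL S :=
  closed_union_of_reg_is_PL_general n L X hX S hopen hdense
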